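/- Let A be a cubic-matrix of order 3 and let B be obtained from A by interchanging two consecutive vertical pages (transposing two adjacent values of the second index). Then det₃(B) = −det₃(A). -/

import Mathlib

def det3 {F : Type*} [Field F] (A : Fin 3 → Fin 3 → Fin 3 → F) : F :=
  A 0 0 0 * A 1 1 1 * A 2 2 2 - A 0 0 0 * A 1 2 1 * A 2 1 2 - A 0 0 0 * A 1 1 2 * A 2 2 1 + A 0 0 0 * A 1 2 2 * A 2 1 1 - A 0 0 1 * A 1 1 0 * A 2 2 2 + A 0 0 1 * A 1 1 2 * A 2 2 0 + A 0 0 1 * A 1 2 0 * A 2 1 2 - A 0 0 1 * A 1 2 2 * A 2 1 0 + A 0 0 2 * A 1 1 0 * A 2 2 1 - A 0 0 2 * A 1 1 1 * A 2 2 0 - A 0 0 2 * A 1 2 0 * A 2 1 1 + A 0 0 2 * A 1 2 1 * A 2 1 0 - A 0 1 0 * A 1 0 1 * A 2 2 2 + A 0 1 0 * A 1 0 2 * A 2 2 1 + A 0 1 0 * A 1 2 1 * A 2 0 2 - A 0 1 0 * A 1 2 2 * A 2 0 1 + A 0 1 1 * A 1 0 0 * A 2 2 2 - A 0 1 1 *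 A 1 0 2 * A 2 2 0 - A 0 1 1 * A 1 2 0 * A 2 0 2 + A 0 1 1 * A 1 2 2 * A 2 0 0 - A 0 1 2 * A 1 0 0 * A 2 2 1 + A 0 1 2 * A 1 0 1 * A 2 2 0 + A 0 1 2 * A 1 2 0 * A 2 0 1 - A 0 1 2 * A 1 2 1 * A 2 0 0 + A 0 2 0 * A 1 0 1 * A 2 1 2 - A 0 2 0 * A 1 0 2 * A 2 1 1 - A 0 2 0 * A 1 1 1 * A 2 0 2 + A 0 2 0 * A 1 1 2 * A 2 0 1 - A 0 2 1 * A 1 0 0 * A 2 1 2 + A 0 2 1 * A 1 0 2 * A 2 1 0 + A 0 2 1 * A 1 1 0 * A 2 0 2 - A 0 2 1 * A 1 1 2 * A 2 0 0 + A 0 2 2 * A 1 0 0 * A 2 1 1 - A 0 2 2 * A 1 0 1 * A 2 1 0 - A 0 2 2 * A 1 1 0 * A 2 0 1 + A 0 2 2 * A 1 1 1 * A 2 0 0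

/-!
Expanding along the third index, `det3 A = ∑ τ, sgn τ · det (A i j (τ i))ᵢⱼ`, a signed sum of
ordinary determinants in the first two indices. Permuting the second index by `σ` permutes the
columns of every one of these determinants, so it multiplies `det3` by `sgn σ`.
-/

open Equiv Matrix

theorem univ_perm_fin_three :
    (Finset.univ : Finset (Perm (Fin 3))) =
      {1, swap 0 1, swap 0 2, swap 1 2, swap 0 1 * swap 1 2, swap 1 2 * swap 0 1} := by
  decide

theorem det3_eq_sum_sign_mul_det {F : Type*} [Field F] (A : Fin 3 → Fin 3 → Fin 3 → F) :
    det3 A = ∑ τ : Perm (Fin 3), (Perm.sign τ : F) * (of fun i j => A i j (τ i)).det := by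
  rw [univ_perm_fin_three]
  repeat rw [Finset.sum_insert (by decide)]
  simp only [det3, det_fin_three, of_apply, Finset.sum_singleton, Perm.sign_one, Perm.sign_mul,
    Perm.sign_swap', Perm.coe_one, Perm.coe_mul, id_eq, Function.comp_apply, swap_apply_left,
    swap_apply_right, swap_apply_of_ne_of_ne, ne_eq, Fin.reduceEq, not_false_eq_true, ↓reduceIte,
    Units.val_one, Units.val_neg, Units.val_mul, Int.cast_one, Int.cast_neg, Int.cast_mul]
  ring

theorem det3_permute_pages {F : Type*} [Field F] (A : Fin 3 → Fin 3 → Fin 3 → F)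
    (σ : Perm (Fin 3)) : det3 (fun i j k => A i (σ j) k) = Perm.sign σ * det3 A := by
  simp only [det3_eq_sum_sign_mul_det, Finset.mul_sum]
  refine Finset.sum_congr rfl fun τ _ => ?_
  rw [← mul_left_comm, ← det_permute' σ (of fun i j => A i j (τ i))]
  rfl

theorem det3_swap_vertical_pages {F : Type*} [Field F]
    (A B : Fin 3 → Fin 3 → Fin 3 → F) (σ : Equiv.Perm (Fin 3))
    (hσ : σ = Equiv.swap 0 1 ∨ σ = Equiv.swap 1 2)
    (hB : ∀ i j k, B i j k = A i (σ j) k) :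
    det3 B = -det3 A := by
  obtain rfl : B = fun i j k => A i (σ j) k := funext₃ hB
  have hsign : Perm.sign σ = -1 := by
    rcases hσ with rfl | rfl <;> exact Perm.sign_swap (by decide)
  simp [det3_permute_pages, hsign]
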